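/- arXiv:2002.05991 — 4 statements merged into one kernel-verified Lean document; each statement's English description precedes it below -/
import Mathlib

section
/- Fix ξ ∈ ℂⁿ and let m_ξ = (x₁−ξ₁,…,xₙ−ξₙ) be the maximal ideal at ξ. Let I be an ideal of ℂ[x₁,…,xₙ] of the form I = Q ∩ J, where Q is an m_ξ-primary ideal and J is an ideal not contained in m_ξ (so Q is the isolated m_ξ-primary component of I). Then Q^⊥ = I^⊥ ∩ ℂ[d_ξ]: a polynomial functional Λ ∈ ℂ[d_ξ] vanishes on I if and only if it vanishes on Q. -/
open MvPolynomial

/-- Total degree `|β|` of an exponent vector `β ∈ ℕⁿ`. -/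
def mdeg {n : ℕ} (a : Fin n →₀ ℕ) : ℕ := ∑ i, a i

/-- Iterated partial derivative `∂^β p`. -/
noncomputable def pdiff {n : ℕ} (β : Fin n →₀ ℕ) (p : MvPolynomial (Fin n) ℂ) :
    MvPolynomial (Fin n) ℂ :=
  (List.finRange n).foldr (fun i q => (fun r => pderiv i r)^[β i] q) p

/-- The linear functional on `ℂ[x]` attached to the dual polynomial `Λ ∈ ℂ[d_ξ]`:
`Λ(p) = Σ_β coeff_β(Λ) • (∂^β p)(ξ)`. -/
noncomputable def dapply {n : ℕ} (ξ : Fin n → ℂ) (Λ p : MvPolynomial (Fin n) ℂ) : ℂ :=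
  ∑ β ∈ Λ.support, coeff β Λ * eval ξ (pdiff β p)

/-- The shifted monomial `(x-ξ)^β`. -/
noncomputable def xpow {n : ℕ} (ξ : Fin n → ℂ) (β : Fin n →₀ ℕ) : MvPolynomial (Fin n) ℂ :=
  ∏ i, (X i - C (ξ i)) ^ β i

/-- `∫ᵏΛ`: substitute `0` for `d_{k+1},…,d_n` in `Λ` and take the antiderivative with
respect to `d_k` having no constant term. -/
noncomputable def integ {n : ℕ} (k : Fin n) (Λ : MvPolynomial (Fin n) ℂ) :
    MvPolynomial (Fin n) ℂ :=
  let Λ' := aeval (fun i => if i ≤ k then X i else 0) Λ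
  ∑ β ∈ Λ'.support, monomial (β + Finsupp.single k 1) (coeff β Λ' / ((β k : ℂ) + 1))

/-- The maximal ideal `m_ξ` of polynomials vanishing at `ξ`. -/
noncomputable def mIdeal {n : ℕ} (ξ : Fin n → ℂ) : Ideal (MvPolynomial (Fin n) ℂ) :=
  RingHom.ker (eval ξ)

/-- `β! = β₁!⋯βₙ!`. -/
def ffact {n : ℕ} (a : Fin n →₀ ℕ) : ℕ := ∏ i, (a i).factorial

/-! Since `rad Q = m_ξ` is maximal and `J ⊄ m_ξ`, the ideals `Q` and `J` are comaximal, so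
`Q = Q ^ (N + 1) + Q ∩ J` for every `N`. A functional `Λ ∈ ℂ[d_ξ]` of degree at most `N` only
involves derivatives of order at most `N` at `ξ`, so it vanishes on `m_ξ ^ (N + 1) ⊇ Q ^ (N + 1)`;
hence vanishing on `I = Q ∩ J` forces vanishing on `Q`. -/

section Derivation

variable {R A : Type*} [CommSemiring R] [CommRing A] [Algebra R A]

theorem Derivation.map_mem_pow_pred (D : Derivation R A A) (I : Ideal A) {m : ℕ} {f : A}
    (hf : f ∈ I ^ m) : D f ∈ I ^ (m - 1) := by
  induction m generalizing f with
  | zero => simp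
  | succ m ih =>
    rw [pow_succ] at hf
    refine Submodule.mul_induction_on hf (fun r hr s hs => ?_) (fun x y hx hy => ?_)
    · rw [D.leibniz, smul_eq_mul, smul_eq_mul, Nat.add_sub_cancel]
      refine add_mem (Ideal.mul_mem_right _ _ hr) ?_
      cases m with
      | zero => simp
      | succ m =>
        rw [mul_comm, pow_succ]
        exact Ideal.mul_mem_mul (ih hr) hs
    · rw [map_add]; exact add_mem hx hy

theorem Derivation.iterate_map_mem_pow (D : Derivation R A A) (I : Ideal A) (k : ℕ) {m : ℕ} {f : A}
    (hf : f ∈ I ^ m) : (⇑D)^[k] f ∈ I ^ (m - k) := by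
  induction k generalizing m f with
  | zero => simpa using hf
  | succ k ih =>
    rw [Function.iterate_succ_apply, Nat.sub_succ', Nat.sub_right_comm]
    exact ih (D.map_mem_pow_pred I hf)

end Derivation

theorem Ideal.sup_eq_top_of_radical_eq {R : Type*} [CommRing R] {Q J M : Ideal R}
    (hM : M.IsMaximal) (hrad : Q.radical = M) (hJ : ¬ J ≤ M) : Q ⊔ J = ⊤ := by
  by_contra hne
  obtain ⟨M', hM', hle⟩ := Ideal.exists_le_maximal _ hne
  have hMM' : M = M' :=
    hM.eq_of_le hM'.ne_top (hrad ▸ hM'.isPrime.radical_le_iff.mpr (le_sup_left.trans hle))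
  exact hJ (hMM' ▸ le_sup_right.trans hle)

theorem Ideal.le_pow_succ_sup_inf {R : Type*} [CommRing R] {Q J : Ideal R} (h : Q ⊔ J = ⊤)
    (N : ℕ) : Q ≤ Q ^ (N + 1) ⊔ Q ⊓ J := by
  intro p hp
  obtain ⟨q, hq, j, hj, hqj⟩ :=
    Submodule.mem_sup.mp ((Ideal.pow_sup_eq_top (n := N) h).ge trivial)
  have hp_eq : p = q * p + p * j := by rw [mul_comm q, ← mul_add, hqj, mul_one]
  rw [hp_eq, pow_succ]
  exact add_mem (Ideal.mem_sup_left (Ideal.mul_mem_mul hq hp))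
    (Ideal.mem_sup_right ⟨Q.mul_mem_right _ hp, J.mul_mem_left _ hj⟩)

theorem pdiff_add {n : ℕ} (β : Fin n →₀ ℕ) (p q : MvPolynomial (Fin n) ℂ) :
    pdiff β (p + q) = pdiff β p + pdiff β q := by
  unfold pdiff
  induction List.finRange n with
  | nil => rfl
  | cons i l ih => simp only [List.foldr_cons, ih, iterate_map_add]

theorem pdiff_mem_pow {n : ℕ} (I : Ideal (MvPolynomial (Fin n) ℂ)) (β : Fin n →₀ ℕ) {m : ℕ}
    {f : MvPolynomial (Fin n) ℂ} (hf : f ∈ I ^ m) : pdiff β f ∈ I ^ (m - mdeg β) := by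
  rw [pdiff, mdeg, Fin.sum_univ_def]
  induction List.finRange n with
  | nil => simpa using hf
  | cons i l ih =>
    rw [List.foldr_cons, List.map_cons, List.sum_cons, add_comm, ← Nat.sub_sub]
    exact (pderiv i).iterate_map_mem_pow I (β i) ih

theorem dapply_add {n : ℕ} (ξ : Fin n → ℂ) (Λ p q : MvPolynomial (Fin n) ℂ) :
    dapply ξ Λ (p + q) = dapply ξ Λ p + dapply ξ Λ q := by
  simp only [dapply, pdiff_add, map_add, mul_add, Finset.sum_add_distrib]

theorem dapply_eq_zero_of_mem_pow {n : ℕ} (ξ : Fin n → ℂ) (Λ : MvPolynomial (Fin n) ℂ)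
    {f : MvPolynomial (Fin n) ℂ} (hf : f ∈ mIdeal ξ ^ (Λ.support.sup mdeg + 1)) :
    dapply ξ Λ f = 0 := by
  refine Finset.sum_eq_zero fun β hβ => ?_
  have hβf := pdiff_mem_pow (mIdeal ξ) β hf
  have hpos : Λ.support.sup mdeg + 1 - mdeg β ≠ 0 := by
    have := Finset.le_sup (f := mdeg) hβ
    omega
  rw [RingHom.mem_ker.mp (Ideal.pow_le_self hpos hβf), mul_zero]

theorem mIdeal_isMaximal {n : ℕ} (ξ : Fin n → ℂ) : (mIdeal ξ).IsMaximal :=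
  RingHom.ker_isMaximal_of_surjective _ fun c => ⟨C c, eval_C c⟩

theorem statement2_general {n : ℕ} (ξ : Fin n → ℂ) (I Q J : Ideal (MvPolynomial (Fin n) ℂ))
    (hrad : Q.radical = mIdeal ξ) (hJ : ¬ J ≤ mIdeal ξ)
    (hI : I = Q ⊓ J) :
    ∀ Λ : MvPolynomial (Fin n) ℂ,
      (∀ p ∈ I, dapply ξ Λ p = 0) ↔ (∀ p ∈ Q, dapply ξ Λ p = 0) := by
  intro Λ
  refine ⟨fun hΛ p hp => ?_, fun hΛ p hp => hΛ p (hI ▸ hp).1⟩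
  have hQJ : Q ⊔ J = ⊤ := Ideal.sup_eq_top_of_radical_eq (mIdeal_isMaximal ξ) hrad hJ
  obtain ⟨a, ha, b, hb, rfl⟩ :=
    Submodule.mem_sup.mp (Ideal.le_pow_succ_sup_inf hQJ (Λ.support.sup mdeg) hp)
  have hQm : Q ≤ mIdeal ξ := hrad ▸ Ideal.le_radical
  rw [dapply_add, dapply_eq_zero_of_mem_pow ξ Λ (Ideal.pow_right_mono hQm _ ha), hΛ b (hI ▸ hb),
    add_zero]

/-- if I = Q ∩ J with Q an m_ξ-primary ideal and J ⊄ m_ξ, then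
Q^⊥ = I^⊥ ∩ ℂ[d_ξ]: a polynomial functional vanishes on I iff it vanishes on Q. -/
theorem statement2 {n : ℕ} (ξ : Fin n → ℂ) (I Q J : Ideal (MvPolynomial (Fin n) ℂ))
    (hQ : Q.IsPrimary) (hrad : Q.radical = mIdeal ξ) (hJ : ¬ J ≤ mIdeal ξ)
    (hI : I = Q ⊓ J) :
    ∀ Λ : MvPolynomial (Fin n) ℂ,
      (∀ p ∈ I, dapply ξ Λ p = 0) ↔ (∀ p ∈ Q, dapply ξ Λ p = 0) :=
  statement2_general ξ I Q J hrad hJ hI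
end

section
/- Let Λ₁,…,Λ_s ∈ ℂ[d₁,…,dₙ] all have degree ≤ t, and suppose D = span(Λ₁,…,Λ_s) is stable under each derivation ∂_{d_k}. Then a polynomial Δ ∈ ℂ[d] with no constant term satisfies ∂_{d_k}(Δ) ∈ D for all k = 1,…,n if and only if there exist scalars ν_i^k ∈ ℂ such that Δ = Σ_{i=1}^s Σ_{k=1}^n ν_i^k ∫ᵏΛ_i and Σ_{i=1}^s ( ν_i^k ∂_{d_l}(Λ_i) − ν_i^l ∂_{d_k}(Λ_i) ) = 0 for all 1 ≤ k < l ≤ n. Moreover, in that case ∂_{d_k}(Δ) = Σ_{i=1}^s ν_i^k Λ_i for every k = 1,…,n. -/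
/-!
Write `∫ᵏ = A_k ∘ π_k`, where `π_k` sets `d_j = 0` for `j > k` and `A_k` is the
antiderivative in `d_k` with no constant term. On a monomial `d^β`, `∫ᵏ ∂_k d^β` is `d^β`
itself when `k` is the last variable occurring in `d^β` and `0` otherwise, so
`Δ = Σ_k ∫ᵏ ∂_k Δ` whenever `Δ(0) = 0`: writing `∂_k Δ ∈ D` in terms of the `Λ_i` gives the
`ν`, and `∂_k ∂_l = ∂_l ∂_k` gives the relations. Conversely, with `F_k = Σ_i ν_i^k Λ_i` the
relations say `∂_l F_k = ∂_k F_l`, and `∂_l ∫ᵏ F_k` is `0` for `k < l`, `π_l F_l` for `k = l`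
and `∫ᵏ ∂_k F_l` for `k > l`; by the same monomial count these add up to `F_l`, a polynomial
Poincaré lemma.
-/

open MvPolynomial

namespace MvPolynomial

theorem pderiv_comm {R σ : Type*} [CommRing R] (i j : σ) (p : MvPolynomial σ R) :
    pderiv i (pderiv j p) = pderiv j (pderiv i p) := by
  classical
  have h : ⁅pderiv i, pderiv j⁆ = (0 : Derivation R (MvPolynomial σ R) (MvPolynomial σ R)) :=
    derivation_ext fun k => by
      rw [Derivation.commutator_apply]
      simp [pderiv_X, Pi.single_apply, apply_ite]
  rw [← sub_eq_zero, ← Derivation.commutator_apply, h, Derivation.zero_apply]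

section Antiderivative

variable {σ K : Type*} [Field K]

noncomputable def antideriv (k : σ) : MvPolynomial σ K →ₗ[K] MvPolynomial σ K :=
  (basisMonomials σ K).constr K fun β => monomial (β + Finsupp.single k 1) ((β k : K) + 1)⁻¹

theorem antideriv_monomial (k : σ) (β : σ →₀ ℕ) (c : K) :
    antideriv k (monomial β c) = monomial (β + Finsupp.single k 1) (c / ((β k : K) + 1)) := by
  have hbasis : monomial β c = c • basisMonomials σ K β := by simp [smul_monomial]
  rw [hbasis, map_smul, antideriv, Module.Basis.constr_basis, smul_monomial, smul_eq_mul,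
    div_eq_mul_inv]

theorem pderiv_antideriv_of_ne [DecidableEq σ] {k l : σ} (h : l ≠ k) (p : MvPolynomial σ K) :
    pderiv l (antideriv k p) = antideriv k (pderiv l p) := by
  induction p using induction_on' with
  | monomial β c =>
    have hexp : β + Finsupp.single k 1 - Finsupp.single l 1
        = β - Finsupp.single l 1 + Finsupp.single k 1 := by
      ext j
      simp only [Finsupp.tsub_apply, Finsupp.add_apply, Finsupp.single_apply]
      split_ifs with hk hl <;> first | omega | exact absurd (hl.trans hk.symm) h
    rw [antideriv_monomial, pderiv_monomial, pderiv_monomial, antideriv_monomial, hexp,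
      Finsupp.add_apply, Finsupp.single_eq_of_ne h, Finsupp.tsub_apply,
      Finsupp.single_eq_of_ne h.symm, add_zero, tsub_zero, div_mul_eq_mul_div]
  | add p q hp hq => rw [map_add, map_add, map_add, map_add, hp, hq]

variable [CharZero K]

theorem pderiv_antideriv_self (k : σ) (p : MvPolynomial σ K) :
    pderiv k (antideriv k p) = p := by
  induction p using induction_on' with
  | monomial β c =>
    have hβk : (β k : K) + 1 ≠ 0 := by exact_mod_cast (β k).succ_ne_zero
    rw [antideriv_monomial, pderiv_monomial, add_tsub_cancel_right, Finsupp.add_apply,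
      Finsupp.single_eq_same, Nat.cast_add, Nat.cast_one, div_mul_cancel₀ c hβk]
  | add p q hp hq => rw [map_add, map_add, hp, hq]

theorem antideriv_pderiv_monomial_self (k : σ) (β : σ →₀ ℕ) (c : K) :
    antideriv k (pderiv k (monomial β c)) = if β k = 0 then 0 else monomial β c := by
  rw [pderiv_monomial, antideriv_monomial]
  split_ifs with hβk
  · simp [hβk]
  · have hβk₁ : 1 ≤ β k := Nat.one_le_iff_ne_zero.mpr hβk
    have hβk' : (β k : K) ≠ 0 := by exact_mod_cast hβk
    rw [tsub_add_cancel_of_le (Finsupp.single_le_iff.mpr hβk₁), Finsupp.tsub_apply,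
      Finsupp.single_eq_same, Nat.cast_sub hβk₁, Nat.cast_one, sub_add_cancel,
      mul_div_cancel_right₀ c hβk']

end Antiderivative

section KillAbove

variable {σ R : Type*} [LinearOrder σ] [CommSemiring R]

noncomputable def killAbove (k : σ) : MvPolynomial σ R →ₐ[R] MvPolynomial σ R :=
  aeval fun i => if i ≤ k then X i else 0

open scoped Classical in
theorem killAbove_monomial (k : σ) (β : σ →₀ ℕ) (c : R) :
    killAbove k (monomial β c) = if ∀ j, k < j → β j = 0 then monomial β c else 0 := by
  rw [killAbove, aeval_monomial, algebraMap_eq]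
  split_ifs with hβ
  · rw [monomial_eq]
    congr 1
    refine Finsupp.prod_congr fun i hi => ?_
    rw [if_pos (not_lt.mp fun hki => Finsupp.mem_support_iff.mp hi (hβ i hki))]
  · push Not at hβ
    obtain ⟨j, hkj, hj⟩ := hβ
    refine mul_eq_zero_of_right _ (Finset.prod_eq_zero (Finsupp.mem_support_iff.mpr hj) ?_)
    simp only [if_neg (not_le.mpr hkj), zero_pow hj]

theorem pderiv_killAbove_of_lt {k l : σ} (h : k < l) (p : MvPolynomial σ R) :
    pderiv l (killAbove k p) = 0 := by
  induction p using induction_on' with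
  | monomial β c =>
    rw [killAbove_monomial]
    split_ifs with hβ
    · rw [pderiv_monomial, hβ l h, Nat.cast_zero, mul_zero, map_zero]
    · exact map_zero _
  | add p q hp hq => rw [map_add, map_add, hp, hq, add_zero]

theorem pderiv_killAbove_of_le {k l : σ} (h : l ≤ k) (p : MvPolynomial σ R) :
    pderiv l (killAbove k p) = killAbove k (pderiv l p) := by
  induction p using induction_on' with
  | monomial β c =>
    have hcond : (∀ j, k < j → (β - Finsupp.single l 1 : σ →₀ ℕ) j = 0) ↔ ∀ j, k < j → β j = 0 :=
      forall₂_congr fun j hkj => by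
        rw [Finsupp.tsub_apply, Finsupp.single_eq_of_ne (h.trans_lt hkj).ne', tsub_zero]
    rw [pderiv_monomial, killAbove_monomial, killAbove_monomial, hcond]
    split_ifs
    · rw [pderiv_monomial]
    · exact map_zero _
  | add p q hp hq => rw [map_add, map_add, map_add, map_add, hp, hq]

end KillAbove

end MvPolynomial

section LastVar

variable {σ : Type*} [LinearOrder σ] {β : σ →₀ ℕ}

def IsLastVar (β : σ →₀ ℕ) (k : σ) : Prop :=
  β k ≠ 0 ∧ ∀ j, k < j → β j = 0

theorem IsLastVar.unique {k₁ k₂ : σ} (h₁ : IsLastVar β k₁) (h₂ : IsLastVar β k₂) : k₁ = k₂ :=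
  le_antisymm (not_lt.mp fun h => h₁.1 (h₂.2 _ h)) (not_lt.mp fun h => h₂.1 (h₁.2 _ h))

theorem exists_isLastVar_ge {j : σ} (hj : β j ≠ 0) : ∃ k, j ≤ k ∧ IsLastVar β k := by
  have hne : β.support.Nonempty := ⟨j, Finsupp.mem_support_iff.mpr hj⟩
  refine ⟨β.support.max' hne, β.support.le_max' j (Finsupp.mem_support_iff.mpr hj),
    Finsupp.mem_support_iff.mp (β.support.max'_mem hne), fun i hi => ?_⟩
  by_contra hi'
  exact (β.support.le_max' i (Finsupp.mem_support_iff.mpr hi')).not_gt hi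

end LastVar

section Integ

variable {n : ℕ}

theorem integ_eq_antideriv_killAbove (k : Fin n) (p : MvPolynomial (Fin n) ℂ) :
    integ k p = antideriv k (killAbove k p) := by
  conv_rhs => rw [(killAbove k p).as_sum, map_sum]
  simp only [antideriv_monomial]
  rfl

theorem integ_add (k : Fin n) (p q : MvPolynomial (Fin n) ℂ) :
    integ k (p + q) = integ k p + integ k q := by
  simp only [integ_eq_antideriv_killAbove, map_add]

theorem integ_smul (k : Fin n) (c : ℂ) (p : MvPolynomial (Fin n) ℂ) :
    integ k (c • p) = c • integ k p := by
  simp only [integ_eq_antideriv_killAbove, map_smul]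

theorem integ_sum {ι : Type*} (k : Fin n) (s : Finset ι) (f : ι → MvPolynomial (Fin n) ℂ) :
    integ k (∑ i ∈ s, f i) = ∑ i ∈ s, integ k (f i) := by
  simp only [integ_eq_antideriv_killAbove, map_sum]

theorem pderiv_integ_eq_zero {k l : Fin n} (h : k < l) (p : MvPolynomial (Fin n) ℂ) :
    pderiv l (integ k p) = 0 := by
  rw [integ_eq_antideriv_killAbove, pderiv_antideriv_of_ne h.ne', pderiv_killAbove_of_lt h,
    map_zero]

theorem pderiv_integ_self (k : Fin n) (p : MvPolynomial (Fin n) ℂ) :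
    pderiv k (integ k p) = killAbove k p := by
  rw [integ_eq_antideriv_killAbove, pderiv_antideriv_self]

theorem pderiv_integ_of_lt {k l : Fin n} (h : l < k) (p : MvPolynomial (Fin n) ℂ) :
    pderiv l (integ k p) = integ k (pderiv l p) := by
  rw [integ_eq_antideriv_killAbove, integ_eq_antideriv_killAbove, pderiv_antideriv_of_ne h.ne,
    pderiv_killAbove_of_le h.le]

open scoped Classical in
theorem integ_pderiv_monomial_self (k : Fin n) (β : Fin n →₀ ℕ) (c : ℂ) :
    integ k (pderiv k (monomial β c)) = if IsLastVar β k then monomial β c else 0 := by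
  rw [integ_eq_antideriv_killAbove, ← pderiv_killAbove_of_le le_rfl, killAbove_monomial]
  by_cases hβ : ∀ j, k < j → β j = 0
  · rw [if_pos hβ, antideriv_pderiv_monomial_self]
    by_cases hk : β k = 0
    · rw [if_pos hk, if_neg fun h => h.1 hk]
    · rw [if_neg hk, if_pos ⟨hk, hβ⟩]
  · rw [if_neg hβ, map_zero, map_zero, if_neg fun h => hβ h.2]

open scoped Classical in
theorem sum_integ_pderiv_monomial (s : Finset (Fin n)) (β : Fin n →₀ ℕ) (c : ℂ) :
    ∑ k ∈ s, integ k (pderiv k (monomial β c)) =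
      if ∃ k ∈ s, IsLastVar β k then monomial β c else 0 := by
  simp only [integ_pderiv_monomial_self]
  split_ifs with h
  · obtain ⟨k, hk, hlast⟩ := h
    rw [Finset.sum_eq_single_of_mem k hk fun j _ hjk => if_neg fun hj => hjk (hj.unique hlast),
      if_pos hlast]
  · exact Finset.sum_eq_zero fun k hk => if_neg fun hlast => h ⟨k, hk, hlast⟩

theorem killAbove_add_sum_integ_pderiv (l : Fin n) (p : MvPolynomial (Fin n) ℂ) :
    killAbove l p + ∑ k ∈ Finset.Ioi l, integ k (pderiv k p) = p := by
  induction p using induction_on' with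
  | monomial β c =>
    rw [killAbove_monomial, sum_integ_pderiv_monomial]
    by_cases hβ : ∀ j, l < j → β j = 0
    · rw [if_pos hβ, if_neg, add_zero]
      rintro ⟨k, hk, hlast⟩
      exact hlast.1 (hβ k (Finset.mem_Ioi.mp hk))
    · obtain ⟨j, hlj, hj⟩ : ∃ j, l < j ∧ β j ≠ 0 := by simpa using hβ
      obtain ⟨k, hjk, hlast⟩ := exists_isLastVar_ge hj
      rw [if_neg hβ, if_pos ⟨k, Finset.mem_Ioi.mpr (hlj.trans_le hjk), hlast⟩, zero_add]
  | add p q hp hq =>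
    simp only [map_add, integ_add, Finset.sum_add_distrib]
    linear_combination hp + hq

theorem C_coeff_zero_add_sum_integ_pderiv (p : MvPolynomial (Fin n) ℂ) :
    C (coeff 0 p) + ∑ k, integ k (pderiv k p) = p := by
  induction p using induction_on' with
  | monomial β c =>
    rw [sum_integ_pderiv_monomial, coeff_monomial]
    by_cases hβ : β = 0
    · subst hβ
      simp [IsLastVar]
    · obtain ⟨j, hj⟩ : ∃ j, β j ≠ 0 := by simpa [Finsupp.ext_iff] using hβ
      obtain ⟨k, -, hlast⟩ := exists_isLastVar_ge hj
      rw [if_neg hβ, if_pos ⟨k, Finset.mem_univ k, hlast⟩, map_zero, zero_add]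
  | add p q hp hq =>
    simp only [coeff_add, map_add, integ_add, Finset.sum_add_distrib]
    linear_combination hp + hq

theorem pderiv_sum_integ {F : Fin n → MvPolynomial (Fin n) ℂ}
    (hF : ∀ k l, k < l → pderiv l (F k) = pderiv k (F l)) (l : Fin n) :
    pderiv l (∑ k, integ k (F k)) = F l := by
  have hterm : ∀ k, pderiv l (integ k (F k)) =
      (if k = l then killAbove l (F l) else 0) + if l < k then integ k (pderiv k (F l)) else 0 := by
    intro k
    rcases lt_trichotomy k l with hkl | rfl | hlk
    · rw [pderiv_integ_eq_zero hkl, if_neg hkl.ne, if_neg hkl.not_gt, add_zero]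
    · rw [pderiv_integ_self, if_pos rfl, if_neg (lt_irrefl k), add_zero]
    · rw [pderiv_integ_of_lt hlk, ← hF l k hlk, if_neg hlk.ne', if_pos hlk, zero_add]
  rw [map_sum, Finset.sum_congr rfl fun k _ => hterm k, Finset.sum_add_distrib,
    Finset.sum_ite_eq', if_pos (Finset.mem_univ l), ← Finset.sum_filter, Finset.filter_lt_eq_Ioi,
    killAbove_add_sum_integ_pderiv]

theorem pderiv_eq_sum_smul_of_eq_sum_smul_integ {s : ℕ} {Λ : Fin s → MvPolynomial (Fin n) ℂ}
    {Δ : MvPolynomial (Fin n) ℂ} {ν : Fin s → Fin n → ℂ}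
    (hrep : Δ = ∑ i, ∑ k, ν i k • integ k (Λ i))
    (hcomm : ∀ k l : Fin n, k < l →
      ∑ i, (ν i k • pderiv l (Λ i) - ν i l • pderiv k (Λ i)) = 0) (k : Fin n) :
    pderiv k Δ = ∑ i, ν i k • Λ i := by
  have hΔ : Δ = ∑ k, integ k (∑ i, ν i k • Λ i) := by
    simp only [hrep, integ_sum, integ_smul]
    exact Finset.sum_comm
  rw [hΔ]
  refine pderiv_sum_integ (fun k l hkl => ?_) k
  simpa only [map_sum, Derivation.map_smul, Finset.sum_sub_distrib, sub_eq_zero]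
    using hcomm k l hkl

end Integ

theorem statement5_general {n s : ℕ} (Λ : Fin s → MvPolynomial (Fin n) ℂ)
    (Δ : MvPolynomial (Fin n) ℂ) (hΔ : coeff 0 Δ = 0) :
    ((∀ k : Fin n, pderiv k Δ ∈ Submodule.span ℂ (Set.range Λ)) ↔
      ∃ ν : Fin s → Fin n → ℂ,
        Δ = ∑ i, ∑ k, ν i k • integ k (Λ i) ∧
        ∀ k l : Fin n, k < l →
          ∑ i, (ν i k • pderiv l (Λ i) - ν i l • pderiv k (Λ i)) = 0) ∧
    (∀ ν : Fin s → Fin n → ℂ,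
      Δ = ∑ i, ∑ k, ν i k • integ k (Λ i) →
      (∀ k l : Fin n, k < l →
        ∑ i, (ν i k • pderiv l (Λ i) - ν i l • pderiv k (Λ i)) = 0) →
      ∀ k : Fin n, pderiv k Δ = ∑ i, ν i k • Λ i) := by
  refine ⟨⟨fun hmem => ?_, fun ⟨ν, hrep, hcomm⟩ k => ?_⟩,
    fun _ => pderiv_eq_sum_smul_of_eq_sum_smul_integ⟩
  · choose ν hν using fun k => (Submodule.mem_span_range_iff_exists_fun ℂ).mp (hmem k)
    refine ⟨fun i k => ν k i, ?_, fun k l _ => ?_⟩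
    · have hsum := C_coeff_zero_add_sum_integ_pderiv Δ
      rw [hΔ, map_zero, zero_add] at hsum
      rw [Finset.sum_comm, ← hsum]
      simp only [← hν, integ_sum, integ_smul]
    · have hcomm := pderiv_comm l k Δ
      simp only [← hν, map_sum, Derivation.map_smul] at hcomm
      rw [Finset.sum_sub_distrib, sub_eq_zero]
      exact hcomm
  · rw [pderiv_eq_sum_smul_of_eq_sum_smul_integ hrep hcomm k]
    exact Submodule.sum_mem _ fun i _ => Submodule.smul_mem _ _ (Submodule.subset_span ⟨i, rfl⟩)

/-- characterization of the elements Δ with all derivatives in a given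
derivation-stable span, via the integration operators ∫ᵏ and commutation relations. -/
theorem statement5 {n s t : ℕ} (Λ : Fin s → MvPolynomial (Fin n) ℂ)
    (hdeg : ∀ i, (Λ i).totalDegree ≤ t)
    (hstab : ∀ Λ' ∈ Submodule.span ℂ (Set.range Λ), ∀ k : Fin n,
        pderiv k Λ' ∈ Submodule.span ℂ (Set.range Λ))
    (Δ : MvPolynomial (Fin n) ℂ) (hΔ : coeff 0 Δ = 0) :
    ((∀ k : Fin n, pderiv k Δ ∈ Submodule.span ℂ (Set.range Λ)) ↔
      ∃ ν : Fin s → Fin n → ℂ,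
        Δ = ∑ i, ∑ k, ν i k • integ k (Λ i) ∧
        ∀ k l : Fin n, k < l →
          ∑ i, (ν i k • pderiv l (Λ i) - ν i l • pderiv k (Λ i)) = 0) ∧
    (∀ ν : Fin s → Fin n → ℂ,
      Δ = ∑ i, ∑ k, ν i k • integ k (Λ i) →
      (∀ k l : Fin n, k < l →
        ∑ i, (ν i k • pderiv l (Λ i) - ν i l • pderiv k (Λ i)) = 0) →
      ∀ k : Fin n, pderiv k Δ = ∑ i, ν i k • Λ i) :=
  statement5_general Λ Δ hΔ
end

section
/- Fix ξ ∈ ℂⁿ and let Q be an m_ξ-primary ideal with dim_ℂ ℂ[x]/Q = μ. Let B = {(x−ξ)^{β₁},…,(x−ξ)^{β_μ}} be a monomial basis of ℂ[x]/Q and Λ = {Λ₁,…,Λ_μ} the basis of Q^⊥ dual to B, with ord(Λ_i) = |β_i| for all i. For α ∈ ℕⁿ write μ_{β_i,α} := Λ_i((x−ξ)^α), so that the normal form of (x−ξ)^α modulo Q in the basis B is N((x−ξ)^α) = Σ_i μ_{β_i,α}(x−ξ)^{β_i}. Then for every k = 1,…,n and every i: ∂_{d_k}(Λ_i) = Σ_{j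 : |β_j| < |β_i|} μ_{β_i, β_j + e_k} Λ_j; in particular, the matrix of the multiplication map by (x_k − ξ_k) on ℂ[x]/Q in the basis B is the transpose of the matrix of ∂_{d_k} on Q^⊥ in the basis Λ, namely [μ_{β_i, β_j + e_k}]_{1≤i,j≤μ}. -/
open MvPolynomial

/-! Evaluating a dual polynomial on shifted monomials reads off its coefficients,
`Λ((x-ξ)^γ) = γ! · coeff_γ Λ`. Hence `Λ` is determined by these values, and `∂_{d_k}Λ` is the
functional `p ↦ Λ((x_k-ξ_k) p)`. Since the `Λ_i` vanish on `Q` and are dual to `B`, the values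
`Λ_i(p)` are the coordinates of the normal form `N(p)`; applying `Λ_i` to
`(x_k-ξ_k)(p - N(p)) ∈ Q` gives `Λ_i((x_k-ξ_k) p) = Σ_j μ_{β_i,β_j+e_k} Λ_j(p)`, which is both
claims. The terms with `|β_j| ≥ |β_i|` vanish because `Λ_i` has total degree `|β_i|`. -/

open Finset

section

section Derivations

variable {σ R : Type*} [CommSemiring R]

lemma pderiv_prod_eq_zero (i : σ) (s : Finset σ) (f : σ → MvPolynomial σ R)
    (h : ∀ j ∈ s, pderiv i (f j) = 0) : pderiv i (∏ j ∈ s, f j) = 0 := by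
  classical
  induction s using Finset.cons_induction with
  | empty => simp
  | cons a s ha ih =>
    rw [prod_cons, pderiv_mul, h a (mem_cons_self a s), ih fun j hj => h j (mem_cons_of_mem hj)]
    simp

end Derivations

lemma descFactorial_mul_zero_pow {R : Type*} [Semiring R] (m t : ℕ) :
    (m.descFactorial t : R) * 0 ^ (m - t) = if t = m then (m.factorial : R) else 0 := by
  rcases lt_trichotomy t m with h | rfl | h
  · simp [h.ne, zero_pow (Nat.sub_ne_zero_of_lt h)]
  · simp [Nat.descFactorial_self]
  · simp [h.ne', Nat.descFactorial_eq_zero_iff_lt.mpr h]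

variable {n : ℕ}

noncomputable def pdiffₗ (β : Fin n →₀ ℕ) : Module.End ℂ (MvPolynomial (Fin n) ℂ) :=
  (List.finRange n).foldr (fun i f => (pderiv i).toLinearMap ^ β i * f) 1

lemma pdiffₗ_apply (β : Fin n →₀ ℕ) (p : MvPolynomial (Fin n) ℂ) : pdiffₗ β p = pdiff β p := by
  unfold pdiffₗ pdiff
  induction List.finRange n with
  | nil => rfl
  | cons a l ih =>
    simp only [List.foldr_cons, Module.End.mul_apply, Module.End.pow_apply, ih]
    rfl

noncomputable def dapplyₗ (ξ : Fin n → ℂ) (Λ : MvPolynomial (Fin n) ℂ) :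
    MvPolynomial (Fin n) ℂ →ₗ[ℂ] ℂ :=
  ∑ β ∈ Λ.support, coeff β Λ • ((aeval ξ).toLinearMap ∘ₗ pdiffₗ β)

lemma dapplyₗ_apply (ξ : Fin n → ℂ) (Λ p : MvPolynomial (Fin n) ℂ) :
    dapplyₗ ξ Λ p = dapply ξ Λ p := by
  simp [dapplyₗ, dapply, pdiffₗ_apply]

section ShiftedMonomials

variable (ξ : Fin n → ℂ)

lemma pderiv_prod_X_sub_C_pow (i : Fin n) (e : Fin n → ℕ) :
    pderiv i (∏ j, (X j - C (ξ j)) ^ e j) =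
      e i • ∏ j, (X j - C (ξ j)) ^ Function.update e i (e i - 1) j := by
  have hrest : ∏ j ∈ univ.erase i, (X j - C (ξ j)) ^ Function.update e i (e i - 1) j =
      ∏ j ∈ univ.erase i, (X j - C (ξ j) : MvPolynomial (Fin n) ℂ) ^ e j :=
    prod_congr rfl fun j hj => by rw [Function.update_of_ne (ne_of_mem_erase hj)]
  rw [← mul_prod_erase univ _ (mem_univ i), ← mul_prod_erase univ _ (mem_univ i), hrest,
    pderiv_mul, pderiv_prod_eq_zero i _ _ fun j hj => by
      simp [pderiv_X_of_ne (ne_of_mem_erase hj)]]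
  simp [nsmul_eq_mul, mul_assoc]

lemma pow_pderiv_prod_X_sub_C_pow (i : Fin n) (t : ℕ) (e : Fin n → ℕ) :
    ((pderiv i).toLinearMap ^ t) (∏ j, (X j - C (ξ j)) ^ e j) =
      (e i).descFactorial t • ∏ j, (X j - C (ξ j)) ^ Function.update e i (e i - t) j := by
  induction t with
  | zero => simp
  | succ t ih =>
    rw [pow_succ', Module.End.mul_apply, ih, map_nsmul, Derivation.coeFn_coe,
      pderiv_prod_X_sub_C_pow, smul_smul, Function.update_idem, Function.update_self,
      Nat.descFactorial_succ, Nat.sub_sub, mul_comm]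

lemma foldr_pow_pderiv_prod_X_sub_C_pow (β : Fin n →₀ ℕ) (e : Fin n → ℕ) (l : List (Fin n))
    (hl : l.Nodup) :
    l.foldr (fun i f => (pderiv i).toLinearMap ^ β i * f) (1 : Module.End ℂ _)
        (∏ j, (X j - C (ξ j)) ^ e j) =
      (∏ i ∈ l.toFinset, (e i).descFactorial (β i)) •
        ∏ j, (X j - C (ξ j)) ^ (if j ∈ l then e j - β j else e j) := by
  induction l with
  | nil => simp
  | cons a l ih =>
    obtain ⟨ha, hl⟩ := List.nodup_cons.mp hl
    have hupdate : Function.update (fun j => if j ∈ l then e j - β j else e j) a (e a - β a) =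
        fun j => if j ∈ a :: l then e j - β j else e j := by
      funext j
      by_cases hj : j = a <;> simp [hj, ha]
    rw [List.foldr_cons, Module.End.mul_apply, ih hl, map_nsmul, pow_pderiv_prod_X_sub_C_pow,
      smul_smul]
    simp only [ha, if_false, hupdate]
    rw [List.toFinset_cons, prod_insert (mt List.mem_toFinset.mp ha), mul_comm]

lemma pdiff_xpow (β γ : Fin n →₀ ℕ) :
    pdiff β (xpow ξ γ) =
      (∏ i, (γ i).descFactorial (β i)) • ∏ j, (X j - C (ξ j)) ^ (γ j - β j) := by
  rw [← pdiffₗ_apply, pdiffₗ, xpow,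
    foldr_pow_pderiv_prod_X_sub_C_pow ξ β γ _ (List.nodup_finRange n)]
  simp [List.toFinset_finRange]

lemma eval_pdiff_xpow (β γ : Fin n →₀ ℕ) :
    eval ξ (pdiff β (xpow ξ γ)) = if β = γ then (ffact γ : ℂ) else 0 := by
  rw [pdiff_xpow, nsmul_eq_mul, Nat.cast_prod, ← prod_mul_distrib, map_prod]
  simp only [map_mul, map_natCast, map_pow, map_sub, eval_X, eval_C, sub_self,
    descFactorial_mul_zero_pow, Fintype.prod_ite_zero, ffact, Nat.cast_prod, DFunLike.ext_iff]
  congr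

lemma dapply_xpow (Λ : MvPolynomial (Fin n) ℂ) (γ : Fin n →₀ ℕ) :
    dapply ξ Λ (xpow ξ γ) = coeff γ Λ * ffact γ := by
  rw [dapply, sum_eq_single γ]
  · rw [eval_pdiff_xpow, if_pos rfl]
  · intro β _ hne
    rw [eval_pdiff_xpow, if_neg hne, mul_zero]
  · intro h
    rw [notMem_support_iff.mp h, zero_mul]

end ShiftedMonomials

lemma ffact_ne_zero (γ : Fin n →₀ ℕ) : (ffact γ : ℂ) ≠ 0 := by
  simp [ffact, prod_ne_zero_iff, Nat.factorial_ne_zero]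

lemma ffact_add_single (γ : Fin n →₀ ℕ) (k : Fin n) :
    ffact (γ + Finsupp.single k 1) = (γ k + 1) * ffact γ := by
  simp only [ffact, Finsupp.add_apply, Finsupp.single_apply]
  rw [← mul_prod_erase univ _ (mem_univ k), ← mul_prod_erase univ _ (mem_univ k),
    if_pos rfl, Nat.factorial_succ, mul_assoc]
  congr 2
  exact prod_congr rfl fun j hj => by rw [if_neg (ne_of_mem_erase hj).symm, add_zero]

lemma mdeg_eq_degree (γ : Fin n →₀ ℕ) : mdeg γ = γ.degree :=
  (Finsupp.degree_eq_sum γ).symm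

lemma mdeg_add_single (γ : Fin n →₀ ℕ) (k : Fin n) :
    mdeg (γ + Finsupp.single k 1) = mdeg γ + 1 := by
  simp only [mdeg_eq_degree, map_add, Finsupp.degree_single]

lemma xpow_add_single (ξ : Fin n → ℂ) (γ : Fin n →₀ ℕ) (k : Fin n) :
    xpow ξ (γ + Finsupp.single k 1) = (X k - C (ξ k)) * xpow ξ γ := by
  simp only [xpow, Finsupp.add_apply, Finsupp.single_apply, pow_add, prod_mul_distrib,
    pow_ite, pow_one, pow_zero, prod_ite_eq, mem_univ, if_true, mul_comm]

lemma dapply_sub (ξ : Fin n → ℂ) (Λ p q : MvPolynomial (Fin n) ℂ) :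
    dapply ξ Λ (p - q) = dapply ξ Λ p - dapply ξ Λ q := by
  simp only [← dapplyₗ_apply, map_sub]

lemma dapply_sum_smul {ι : Type*} (ξ : Fin n → ℂ) (Λ : MvPolynomial (Fin n) ℂ) (s : Finset ι)
    (c : ι → ℂ) (p : ι → MvPolynomial (Fin n) ℂ) :
    dapply ξ Λ (∑ j ∈ s, c j • p j) = ∑ j ∈ s, c j * dapply ξ Λ (p j) := by
  simp only [← dapplyₗ_apply, map_sum, map_smul, smul_eq_mul]

lemma dapply_xpow_eq_zero_of_totalDegree_lt (ξ : Fin n → ℂ) {Λ : MvPolynomial (Fin n) ℂ}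
    {γ : Fin n →₀ ℕ} (h : Λ.totalDegree < mdeg γ) : dapply ξ Λ (xpow ξ γ) = 0 := by
  rw [dapply_xpow, coeff_eq_zero_of_totalDegree_lt, zero_mul]
  rwa [mdeg_eq_degree] at h

lemma dapply_pderiv_xpow (ξ : Fin n → ℂ) (k : Fin n) (Λ : MvPolynomial (Fin n) ℂ)
    (γ : Fin n →₀ ℕ) :
    dapply ξ (pderiv k Λ) (xpow ξ γ) = dapply ξ Λ ((X k - C (ξ k)) * xpow ξ γ) := by
  rw [← xpow_add_single, dapply_xpow, dapply_xpow, coeff_pderiv, ffact_add_single]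
  push_cast
  ring

lemma dapply_sum_smul_left_xpow {ι : Type*} (ξ : Fin n → ℂ) (s : Finset ι) (c : ι → ℂ)
    (Λ : ι → MvPolynomial (Fin n) ℂ) (γ : Fin n →₀ ℕ) :
    dapply ξ (∑ j ∈ s, c j • Λ j) (xpow ξ γ) = ∑ j ∈ s, c j * dapply ξ (Λ j) (xpow ξ γ) := by
  simp only [dapply_xpow, coeff_sum, coeff_smul, smul_eq_mul, sum_mul, mul_assoc]

lemma eq_of_forall_dapply_xpow_eq (ξ : Fin n → ℂ) {Λ Λ' : MvPolynomial (Fin n) ℂ}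
    (h : ∀ γ, dapply ξ Λ (xpow ξ γ) = dapply ξ Λ' (xpow ξ γ)) : Λ = Λ' := by
  ext γ
  simpa only [dapply_xpow, mul_left_inj' (ffact_ne_zero γ)] using h γ

section DualBasis

variable {μ : ℕ} {ξ : Fin n → ℂ} {Q : Ideal (MvPolynomial (Fin n) ℂ)}
  {β : Fin μ → (Fin n →₀ ℕ)} {b : Module.Basis (Fin μ) ℂ (MvPolynomial (Fin n) ℂ ⧸ Q)}
  {Λ : Fin μ → MvPolynomial (Fin n) ℂ}

lemma sub_sum_repr_smul_xpow_mem (hb : ∀ i, b i = Ideal.Quotient.mk Q (xpow ξ (β i)))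
    (p : MvPolynomial (Fin n) ℂ) :
    p - ∑ j, b.repr (Ideal.Quotient.mk Q p) j • xpow ξ (β j) ∈ Q := by
  rw [← Ideal.Quotient.eq, ← Ideal.Quotient.mkₐ_eq_mk ℂ, map_sum]
  simp only [map_smul, Ideal.Quotient.mkₐ_eq_mk, ← hb, b.sum_repr]

lemma dapply_eq_repr (hb : ∀ i, b i = Ideal.Quotient.mk Q (xpow ξ (β i)))
    (hvan : ∀ i, ∀ p ∈ Q, dapply ξ (Λ i) p = 0)
    (hdual : ∀ i j, dapply ξ (Λ i) (xpow ξ (β j)) = if i = j then 1 else 0)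
    (i : Fin μ) (p : MvPolynomial (Fin n) ℂ) :
    dapply ξ (Λ i) p = b.repr (Ideal.Quotient.mk Q p) i := by
  have h := hvan i _ (sub_sum_repr_smul_xpow_mem hb p)
  simpa [dapply_sub, dapply_sum_smul, hdual, sub_eq_zero] using h

lemma sub_sum_dapply_smul_xpow_mem (hb : ∀ i, b i = Ideal.Quotient.mk Q (xpow ξ (β i)))
    (hvan : ∀ i, ∀ p ∈ Q, dapply ξ (Λ i) p = 0)
    (hdual : ∀ i j, dapply ξ (Λ i) (xpow ξ (β j)) = if i = j then 1 else 0)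
    (p : MvPolynomial (Fin n) ℂ) :
    p - ∑ i, dapply ξ (Λ i) p • xpow ξ (β i) ∈ Q := by
  simpa only [dapply_eq_repr hb hvan hdual] using sub_sum_repr_smul_xpow_mem hb p

lemma dapply_X_sub_C_mul (hb : ∀ i, b i = Ideal.Quotient.mk Q (xpow ξ (β i)))
    (hvan : ∀ i, ∀ p ∈ Q, dapply ξ (Λ i) p = 0)
    (hdual : ∀ i j, dapply ξ (Λ i) (xpow ξ (β j)) = if i = j then 1 else 0)
    (k : Fin n) (i : Fin μ) (p : MvPolynomial (Fin n) ℂ) :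
    dapply ξ (Λ i) ((X k - C (ξ k)) * p) =
      ∑ j, dapply ξ (Λ i) ((X k - C (ξ k)) * xpow ξ (β j)) * dapply ξ (Λ j) p := by
  have h := hvan i _ (Q.mul_mem_left (X k - C (ξ k)) (sub_sum_dapply_smul_xpow_mem hb hvan hdual p))
  rw [mul_sub, mul_sum, dapply_sub, sub_eq_zero] at h
  simp only [mul_smul_comm, dapply_sum_smul] at h
  rw [h]
  exact sum_congr rfl fun j _ => mul_comm _ _

end DualBasis

end

theorem statement6_general {n μ : ℕ} (ξ : Fin n → ℂ) (Q : Ideal (MvPolynomial (Fin n) ℂ))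
    (β : Fin μ → (Fin n →₀ ℕ))
    (b : Module.Basis (Fin μ) ℂ (MvPolynomial (Fin n) ℂ ⧸ Q))
    (hb : ∀ i, b i = Ideal.Quotient.mk Q (xpow ξ (β i)))
    (Λ : Fin μ → MvPolynomial (Fin n) ℂ)
    (hvan : ∀ i, ∀ p ∈ Q, dapply ξ (Λ i) p = 0)
    (hdual : ∀ i j, dapply ξ (Λ i) (xpow ξ (β j)) = if i = j then 1 else 0)
    (hord : ∀ i, (Λ i).totalDegree = mdeg (β i)) :
    (∀ (k : Fin n) (i : Fin μ),
      pderiv k (Λ i) =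
        ∑ j ∈ Finset.univ.filter (fun j => mdeg (β j) < mdeg (β i)),
          dapply ξ (Λ i) (xpow ξ (β j + Finsupp.single k 1)) • Λ j) ∧
    (∀ (k : Fin n) (j : Fin μ),
      (X k - C (ξ k)) * xpow ξ (β j) -
        ∑ i, dapply ξ (Λ i) (xpow ξ (β j + Finsupp.single k 1)) • xpow ξ (β i) ∈ Q) := by
  simp only [xpow_add_single]
  refine ⟨fun k i => eq_of_forall_dapply_xpow_eq ξ fun γ => ?_, fun k j => ?_⟩
  · have hlower : ∀ j, dapply ξ (Λ i) ((X k - C (ξ k)) * xpow ξ (β j)) ≠ 0 →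
        mdeg (β j) < mdeg (β i) := fun j hj => by
      by_contra hle
      refine hj (xpow_add_single ξ (β j) k ▸ dapply_xpow_eq_zero_of_totalDegree_lt ξ ?_)
      rw [hord, mdeg_add_single]
      omega
    rw [dapply_pderiv_xpow, dapply_X_sub_C_mul hb hvan hdual, dapply_sum_smul_left_xpow,
      sum_filter_of_ne fun j _ hj => hlower j (left_ne_zero_of_mul hj)]
  · exact sub_sum_dapply_smul_xpow_mem hb hvan hdual _

/-- derivatives of the dual basis elements are given by the coefficients
μ_{β_i,β_j+e_k} = Λ_i((x−ξ)^{β_j+e_k}), and the matrix of multiplication by (x_k−ξ_k)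
on ℂ[x]/Q in the basis B is the transpose of the matrix of ∂_{d_k} in the basis Λ. -/
theorem statement6 {n μ : ℕ} (ξ : Fin n → ℂ) (Q : Ideal (MvPolynomial (Fin n) ℂ))
    (hQ : Q.IsPrimary) (hrad : Q.radical = mIdeal ξ)
    (hμ : μ = Module.finrank ℂ (MvPolynomial (Fin n) ℂ ⧸ Q))
    (β : Fin μ → (Fin n →₀ ℕ))
    (b : Module.Basis (Fin μ) ℂ (MvPolynomial (Fin n) ℂ ⧸ Q))
    (hb : ∀ i, b i = Ideal.Quotient.mk Q (xpow ξ (β i)))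
    (Λ : Fin μ → MvPolynomial (Fin n) ℂ)
    (hvan : ∀ i, ∀ p ∈ Q, dapply ξ (Λ i) p = 0)
    (hdual : ∀ i j, dapply ξ (Λ i) (xpow ξ (β j)) = if i = j then 1 else 0)
    (hord : ∀ i, (Λ i).totalDegree = mdeg (β i)) :
    (∀ (k : Fin n) (i : Fin μ),
      pderiv k (Λ i) =
        ∑ j ∈ Finset.univ.filter (fun j => mdeg (β j) < mdeg (β i)),
          dapply ξ (Λ i) (xpow ξ (β j + Finsupp.single k 1)) • Λ j) ∧
    (∀ (k : Fin n) (j : Fin μ),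
      (X k - C (ξ k)) * xpow ξ (β j) -
        ∑ i, dapply ξ (Λ i) (xpow ξ (β j + Finsupp.single k 1)) • xpow ξ (β i) ∈ Q) :=
  statement6_general ξ Q β b hb Λ hvan hdual hord
end

section
/- Fix ξ ∈ ℂⁿ and f = (f₁,…,f_N) ∈ ℂ[x]^N. Let D ⊆ ℂ[d_ξ] be a finite-dimensional subspace such that: D is stable under each derivation ∂_{d_k}; every element of D, as a functional, vanishes on f₁,…,f_N; the constant 1 belongs to D; and D is complete for f at ξ, i.e., every Δ ∈ ℂ[d_ξ] with ∂_{d_k}(Δ) ∈ D for all k = 1,…,n and Δ(f_i) = 0 for all i = 1,…,N belongs to D. Then D = (f)^⊥ ∩ ℂ[d_ξ], i.e., D equals the space of all polynomial functionals vanishing on the ideal (f₁,…,f_N); equivalently, D = Q^⊥ where Q is the m_ξ-primary component of (f₁,…,f_N) at ξ. -/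
open MvPolynomial

/-!
Multiplication by `x_k - ξ_k` is adjoint to `∂/∂d_k` under the pairing `dapply ξ`. Hence the
polynomials killed by a derivation-stable space form an ideal, so `D` kills `(f)` because it kills
the generators; conversely, if `Λ` kills `(f)` then so do its derivatives, which lie in `D` by
induction on the degree, and completeness puts `Λ` in `D`. For the primary component: a functional
of degree `< r` kills `m_ξ ^ r`, and `J ⊄ m_ξ` is comaximal with `m_ξ ^ r`, so
`Q ⊆ Q ⊓ J + m_ξ ^ r`.
-/

section Leibniz

variable {σ R : Type*} [CommRing R]

lemma commute_pderiv_mulLeft_X_sub_C {i k : σ} (h : i ≠ k) (c : R) :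
    Commute (pderiv i).toLinearMap (LinearMap.mulLeft R (X k - C c)) := by
  refine LinearMap.ext fun q => ?_
  simp [pderiv_X_of_ne h.symm]

lemma pderiv_mulLeft_X_sub_C (k : σ) (c : R) :
    (pderiv k).toLinearMap * LinearMap.mulLeft R (X k - C c) =
      LinearMap.mulLeft R (X k - C c) * (pderiv k).toLinearMap + 1 := by
  refine LinearMap.ext fun q => ?_
  simp [add_comm]

lemma pderiv_pow_mulLeft_X_sub_C (k : σ) (c : R) (m : ℕ) :
    (pderiv k).toLinearMap ^ m * LinearMap.mulLeft R (X k - C c) =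
      LinearMap.mulLeft R (X k - C c) * (pderiv k).toLinearMap ^ m +
        (m : R) • (pderiv k).toLinearMap ^ (m - 1) := by
  induction m with
  | zero => simp
  | succ m ih =>
    have hpred : (m : R) • ((pderiv (R := R) k).toLinearMap * (pderiv k).toLinearMap ^ (m - 1)) =
        (m : R) • (pderiv k).toLinearMap ^ m := by
      rcases m with _ | m
      · simp
      · rw [add_tsub_cancel_right, ← pow_succ']
    rw [pow_succ', mul_assoc, ih, mul_add, ← mul_assoc, pderiv_mulLeft_X_sub_C, mul_smul_comm,
      hpred, add_tsub_cancel_right, add_mul, one_mul, mul_assoc]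
    push_cast
    module

end Leibniz

section PartialDerivatives

variable {n : ℕ}

noncomputable def pdiffEnd (l : List (Fin n)) (β : Fin n →₀ ℕ) :
    Module.End ℂ (MvPolynomial (Fin n) ℂ) :=
  (l.map fun i => (pderiv i).toLinearMap ^ β i).prod

lemma pdiffEnd_cons (i : Fin n) (l : List (Fin n)) (β : Fin n →₀ ℕ) :
    pdiffEnd (i :: l) β = (pderiv i).toLinearMap ^ β i * pdiffEnd l β := by
  simp only [pdiffEnd, List.map_cons, List.prod_cons]

lemma pdiff_eq_pdiffEnd (β : Fin n →₀ ℕ) (p : MvPolynomial (Fin n) ℂ) :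
    pdiff β p = pdiffEnd (List.finRange n) β p := by
  rw [pdiff]
  induction List.finRange n with
  | nil => rfl
  | cons i l ih =>
    rw [List.foldr_cons, ih, pdiffEnd_cons, Module.End.mul_apply, Module.End.pow_apply]
    rfl

lemma pdiffEnd_congr {l : List (Fin n)} {β β' : Fin n →₀ ℕ} (h : ∀ i ∈ l, β i = β' i) :
    pdiffEnd l β = pdiffEnd l β' := by
  rw [pdiffEnd, pdiffEnd, List.map_congr_left fun i hi => by rw [h i hi]]

lemma commute_pdiffEnd_mulLeft_X_sub_C {k : Fin n} {l : List (Fin n)} (hk : k ∉ l)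
    (β : Fin n →₀ ℕ) (c : ℂ) :
    Commute (pdiffEnd l β) (LinearMap.mulLeft ℂ (X k - C c)) := by
  refine Commute.list_prod_left _ _ fun T hT => ?_
  obtain ⟨i, hi, rfl⟩ := List.mem_map.mp hT
  exact (commute_pderiv_mulLeft_X_sub_C (ne_of_mem_of_not_mem hi hk) c).pow_left _

lemma pdiffEnd_mul_mulLeft_X_sub_C {k : Fin n} {l : List (Fin n)} (hk : k ∈ l) (hl : l.Nodup)
    (β : Fin n →₀ ℕ) (c : ℂ) :
    pdiffEnd l β * LinearMap.mulLeft ℂ (X k - C c) =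
      LinearMap.mulLeft ℂ (X k - C c) * pdiffEnd l β +
        (β k : ℂ) • pdiffEnd l (β - Finsupp.single k 1) := by
  induction l with
  | nil => simp at hk
  | cons i t ih =>
    obtain ⟨hit, ht⟩ := List.nodup_cons.mp hl
    rcases eq_or_ne i k with rfl | hik
    · have hβt : pdiffEnd t (β - Finsupp.single i 1) = pdiffEnd t β :=
        pdiffEnd_congr fun j hj => by
          simp [Finsupp.single_eq_of_ne (ne_of_mem_of_not_mem hj hit)]
      rw [pdiffEnd_cons, pdiffEnd_cons, hβt, mul_assoc,
        (commute_pdiffEnd_mulLeft_X_sub_C hit β c).eq, ← mul_assoc,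
        pderiv_pow_mulLeft_X_sub_C, add_mul, mul_assoc, smul_mul_assoc]
      simp
    · rw [pdiffEnd_cons, pdiffEnd_cons, mul_assoc, ih (List.mem_of_ne_of_mem hik.symm hk) ht,
        mul_add, ← mul_assoc, ((commute_pderiv_mulLeft_X_sub_C hik c).pow_left _).eq,
        mul_assoc, mul_smul_comm]
      simp [Finsupp.single_eq_of_ne hik]

lemma pdiff_X_sub_C_mul (β : Fin n →₀ ℕ) (k : Fin n) (c : ℂ) (q : MvPolynomial (Fin n) ℂ) :
    pdiff β ((X k - C c) * q) =
      (X k - C c) * pdiff β q + (β k : ℂ) • pdiff (β - Finsupp.single k 1) q := by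
  simpa [pdiff_eq_pdiffEnd] using LinearMap.congr_fun
    (pdiffEnd_mul_mulLeft_X_sub_C (List.mem_finRange k) (List.nodup_finRange n) β c) q

end PartialDerivatives

theorem MvPolynomial.totalDegree_pderiv_lt {σ R : Type*} [CommSemiring R] {i : σ}
    {p : MvPolynomial σ R} (h : pderiv i p ≠ 0) : (pderiv i p).totalDegree < p.totalDegree := by
  classical
  obtain ⟨m, hm, hdeg⟩ :=
    Finset.exists_mem_eq_sup _ (support_nonempty.mpr h) fun s => s.sum fun _ e => e
  have hm' : m + Finsupp.single i 1 ∈ p.support := by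
    rw [mem_support_iff, coeff_pderiv] at hm
    exact mem_support_iff.mpr (left_ne_zero_of_mul hm)
  calc (pderiv i p).totalDegree = m.sum fun _ e => e := hdeg
    _ < (m + Finsupp.single i 1).sum fun _ e => e := by
      rw [Finsupp.sum_add_index' (fun _ => rfl) fun _ _ _ => rfl, Finsupp.sum_single_index rfl]
      exact Nat.lt_succ_self _
    _ ≤ p.totalDegree := le_totalDegree hm'

theorem MvPolynomial.ker_eval_le_span_X_sub_C {σ R : Type*} [CommRing R] (ξ : σ → R) :
    RingHom.ker (eval ξ) ≤ Ideal.span (Set.range fun k => X k - C (ξ k)) := by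
  have hsub : ∀ p : MvPolynomial σ R,
      p - C (eval ξ p) ∈ Ideal.span (Set.range fun k => X k - C (ξ k)) := by
    intro p
    induction p using MvPolynomial.induction_on with
    | C a => simp
    | add p q hp hq =>
      rw [map_add, map_add, add_sub_add_comm]
      exact add_mem hp hq
    | mul_X p k hp =>
      have : p * X k - C (eval ξ (p * X k)) =
          (p - C (eval ξ p)) * X k + C (eval ξ p) * (X k - C (ξ k)) := by
        simp only [map_mul, eval_X]
        ring
      rw [this]
      exact add_mem (Ideal.mul_mem_right _ _ hp)
        (Ideal.mul_mem_left _ _ (Ideal.subset_span ⟨k, rfl⟩))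
  intro p hp
  simpa [RingHom.mem_ker.mp hp] using hsub p

section Dual

variable {n : ℕ} (ξ : Fin n → ℂ)

lemma dapply_eq_sum (Λ p : MvPolynomial (Fin n) ℂ) :
    dapply ξ Λ p = (AddMonoidAlgebra.coeff Λ).sum fun β a => a * eval ξ (pdiff β p) := by
  rw [dapply, sum_def]

lemma dapply_add_left (Λ₁ Λ₂ p : MvPolynomial (Fin n) ℂ) :
    dapply ξ (Λ₁ + Λ₂) p = dapply ξ Λ₁ p + dapply ξ Λ₂ p := by
  simp only [dapply_eq_sum, AddMonoidAlgebra.coeff_add]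
  exact Finsupp.sum_add_index' (fun _ => zero_mul _) fun _ _ _ => add_mul _ _ _

lemma dapply_monomial (β : Fin n →₀ ℕ) (a : ℂ) (p : MvPolynomial (Fin n) ℂ) :
    dapply ξ (monomial β a) p = a * eval ξ (pdiff β p) := by
  rw [dapply_eq_sum, MvPolynomial.sum_monomial_eq (σ := Fin n) (R := ℂ) (zero_mul _)]

lemma dapply_add_right (Λ p q : MvPolynomial (Fin n) ℂ) :
    dapply ξ Λ (p + q) = dapply ξ Λ p + dapply ξ Λ q := by
  simp [dapply, pdiff_eq_pdiffEnd, mul_add, Finset.sum_add_distrib]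

lemma dapply_smul_right (Λ p : MvPolynomial (Fin n) ℂ) (a : ℂ) :
    dapply ξ Λ (a • p) = a * dapply ξ Λ p := by
  simp [dapply, pdiff_eq_pdiffEnd, Finset.mul_sum, mul_left_comm]

lemma dapply_zero_left (p : MvPolynomial (Fin n) ℂ) : dapply ξ 0 p = 0 := by
  simp [dapply]

lemma dapply_X_sub_C_mul_s9 (k : Fin n) (Λ q : MvPolynomial (Fin n) ℂ) :
    dapply ξ Λ ((X k - C (ξ k)) * q) = dapply ξ (pderiv k Λ) q := by
  induction Λ using MvPolynomial.induction_on' with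
  | monomial β a =>
    rw [dapply_monomial, pderiv_monomial, dapply_monomial, pdiff_X_sub_C_mul]
    simp [mul_assoc]
  | add Λ₁ Λ₂ h₁ h₂ => rw [dapply_add_left, h₁, h₂, map_add, dapply_add_left]

lemma dapply_X_mul (k : Fin n) (Λ q : MvPolynomial (Fin n) ℂ) :
    dapply ξ Λ (X k * q) = dapply ξ (pderiv k Λ) q + ξ k * dapply ξ Λ q := by
  rw [← dapply_X_sub_C_mul_s9, ← dapply_smul_right, ← dapply_add_right, smul_eq_C_mul]
  ring_nf

lemma dapply_zero_right (Λ : MvPolynomial (Fin n) ℂ) : dapply ξ Λ 0 = 0 := by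
  simp [dapply, pdiff_eq_pdiffEnd]

lemma dapply_mul_eq_zero {D : Set (MvPolynomial (Fin n) ℂ)}
    (hD : ∀ Λ ∈ D, ∀ k, pderiv k Λ ∈ D) (g : MvPolynomial (Fin n) ℂ) :
    ∀ p, (∀ Λ ∈ D, dapply ξ Λ p = 0) → ∀ Λ ∈ D, dapply ξ Λ (g * p) = 0 := by
  induction g using MvPolynomial.induction_on with
  | C a => intro p hp Λ hΛ; rw [C_mul', dapply_smul_right, hp Λ hΛ, mul_zero]
  | add g₁ g₂ h₁ h₂ =>
    intro p hp Λ hΛ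
    rw [add_mul, dapply_add_right, h₁ p hp Λ hΛ, h₂ p hp Λ hΛ, add_zero]
  | mul_X g k ih =>
    intro p hp
    rw [mul_assoc]
    refine ih _ fun Λ hΛ => ?_
    rw [dapply_X_mul, hp _ (hD Λ hΛ k), hp Λ hΛ, mul_zero, add_zero]

def perpIdeal (D : Set (MvPolynomial (Fin n) ℂ)) (hD : ∀ Λ ∈ D, ∀ k, pderiv k Λ ∈ D) :
    Ideal (MvPolynomial (Fin n) ℂ) where
  carrier := {p | ∀ Λ ∈ D, dapply ξ Λ p = 0}
  add_mem' hp hq Λ hΛ := by rw [dapply_add_right, hp Λ hΛ, hq Λ hΛ, add_zero]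
  zero_mem' Λ _ := dapply_zero_right ξ Λ
  smul_mem' g p := dapply_mul_eq_zero ξ hD g p

lemma dapply_eq_zero_of_mem_mIdeal_pow {r : ℕ} {Λ p : MvPolynomial (Fin n) ℂ}
    (hΛ : Λ.totalDegree < r) (hp : p ∈ mIdeal ξ ^ r) : dapply ξ Λ p = 0 := by
  induction r generalizing Λ p with
  | zero => exact absurd hΛ (Nat.not_lt_zero _)
  | succ r ih =>
    rw [pow_succ'] at hp
    induction hp using Submodule.mul_induction_on' with
    | mem_mul_mem a ha b hb =>
      replace ha := ker_eval_le_span_X_sub_C ξ ha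
      induction ha using Submodule.span_induction generalizing b with
      | mem a ha =>
        obtain ⟨k, rfl⟩ := ha
        rw [dapply_X_sub_C_mul_s9]
        by_cases hk : pderiv k Λ = 0
        · rw [hk, dapply_zero_left]
        · exact ih ((totalDegree_pderiv_lt hk).trans_le (Nat.lt_succ_iff.mp hΛ)) hb
      | zero => rw [zero_mul, dapply_zero_right]
      | add a₁ a₂ _ _ h₁ h₂ => rw [add_mul, dapply_add_right, h₁ b hb, h₂ b hb, add_zero]
      | smul c a _ h =>
        rw [smul_eq_mul, mul_comm c, mul_assoc]
        exact h _ (Ideal.mul_mem_left _ _ hb)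
    | add x _ y _ hx hy => rw [dapply_add_right, hx, hy, add_zero]

end Dual

theorem coe_eq_perp_span_of_complete {n N : ℕ} {ξ : Fin n → ℂ}
    {f : Fin N → MvPolynomial (Fin n) ℂ} {D : Submodule ℂ (MvPolynomial (Fin n) ℂ)}
    (hstab : ∀ Λ ∈ D, ∀ k : Fin n, pderiv k Λ ∈ D)
    (hvan : ∀ Λ ∈ D, ∀ i : Fin N, dapply ξ Λ (f i) = 0)
    (hcomplete : ∀ Δ : MvPolynomial (Fin n) ℂ,
      (∀ k : Fin n, pderiv k Δ ∈ D) → (∀ i : Fin N, dapply ξ Δ (f i) = 0) → Δ ∈ D) :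
    (D : Set (MvPolynomial (Fin n) ℂ)) =
      {Λ | ∀ p ∈ Ideal.span (Set.range f), dapply ξ Λ p = 0} := by
  ext Λ
  refine ⟨fun hΛ p hp => ?_, fun hΛ => ?_⟩
  · have hle : Ideal.span (Set.range f) ≤ perpIdeal ξ D hstab :=
      Ideal.span_le.mpr <| Set.range_subset_iff.mpr fun i Λ hΛ => hvan Λ hΛ i
    exact hle hp Λ hΛ
  · induction h : Λ.totalDegree using Nat.strong_induction_on generalizing Λ with
    | _ d ih =>
      refine hcomplete Λ (fun k => ?_) fun i => hΛ _ (Ideal.subset_span ⟨i, rfl⟩)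
      by_cases hk : pderiv k Λ = 0
      · rw [hk]
        exact D.zero_mem
      refine ih _ (h ▸ totalDegree_pderiv_lt hk) (pderiv k Λ) (fun p hp => ?_) rfl
      rw [← dapply_X_sub_C_mul_s9]
      exact hΛ _ (Ideal.mul_mem_left _ _ hp)

theorem perp_inf_eq_perp_of_not_le {n : ℕ} (ξ : Fin n → ℂ) (Q : Ideal (MvPolynomial (Fin n) ℂ))
    {J : Ideal (MvPolynomial (Fin n) ℂ)} (hJ : ¬ J ≤ mIdeal ξ) :
    {Λ | ∀ p ∈ Q ⊓ J, dapply ξ Λ p = 0} = {Λ | ∀ p ∈ Q, dapply ξ Λ p = 0} := by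
  ext Λ
  refine ⟨fun hΛ p hp => ?_, fun hΛ p hp => hΛ p hp.1⟩
  have hmax : (mIdeal ξ).IsMaximal :=
    RingHom.ker_isMaximal_of_surjective _ fun a => ⟨C a, eval_C a⟩
  have htop : J ⊔ mIdeal ξ ^ (Λ.totalDegree + 1) = ⊤ :=
    Ideal.sup_pow_eq_top <| sup_comm J _ ▸ codisjoint_iff.mp
      (hmax.out.not_le_iff_codisjoint.mp hJ)
  have hQ : Q ≤ Q ⊓ J ⊔ mIdeal ξ ^ (Λ.totalDegree + 1) :=
    calc Q = Q * (J ⊔ mIdeal ξ ^ (Λ.totalDegree + 1)) := by rw [htop, Ideal.mul_top]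
      _ = Q * J ⊔ Q * mIdeal ξ ^ (Λ.totalDegree + 1) := Ideal.mul_sup _ _ _
      _ ≤ Q ⊓ J ⊔ mIdeal ξ ^ (Λ.totalDegree + 1) :=
        sup_le_sup Ideal.mul_le_inf Ideal.mul_le_right
  obtain ⟨a, ha, b, hb, rfl⟩ := Submodule.mem_sup.mp (hQ hp)
  rw [dapply_add_right, hΛ a ha, dapply_eq_zero_of_mem_mIdeal_pow ξ (Nat.lt_succ_self _) hb,
    add_zero]

theorem statement9_general {n N : ℕ} (ξ : Fin n → ℂ) (f : Fin N → MvPolynomial (Fin n) ℂ)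
    (D : Submodule ℂ (MvPolynomial (Fin n) ℂ))
    (hstab : ∀ Λ ∈ D, ∀ k : Fin n, pderiv k Λ ∈ D)
    (hvan : ∀ Λ ∈ D, ∀ i : Fin N, dapply ξ Λ (f i) = 0)
    (hcomplete : ∀ Δ : MvPolynomial (Fin n) ℂ,
      (∀ k : Fin n, pderiv k Δ ∈ D) → (∀ i : Fin N, dapply ξ Δ (f i) = 0) → Δ ∈ D) :
    (↑D : Set (MvPolynomial (Fin n) ℂ)) =
      {Λ | ∀ p ∈ Ideal.span (Set.range f), dapply ξ Λ p = 0} ∧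
    ∀ Q J : Ideal (MvPolynomial (Fin n) ℂ), Q.IsPrimary → Q.radical = mIdeal ξ →
      ¬ J ≤ mIdeal ξ → Ideal.span (Set.range f) = Q ⊓ J →
      (↑D : Set (MvPolynomial (Fin n) ℂ)) = {Λ | ∀ p ∈ Q, dapply ξ Λ p = 0} := by
  have hD := coe_eq_perp_span_of_complete hstab hvan hcomplete
  refine ⟨hD, fun Q J _ _ hJ hQJ => ?_⟩
  rw [hD, hQJ, perp_inf_eq_perp_of_not_le ξ Q hJ]

/-- a derivation-stable finite-dimensional space D containing 1, vanishing
on f and complete for f at ξ equals (f)^⊥ ∩ ℂ[d_ξ]; equivalently D = Q^⊥ for the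
m_ξ-primary component Q of (f). -/
theorem statement9 {n N : ℕ} (ξ : Fin n → ℂ) (f : Fin N → MvPolynomial (Fin n) ℂ)
    (D : Submodule ℂ (MvPolynomial (Fin n) ℂ)) (hfin : FiniteDimensional ℂ D)
    (hstab : ∀ Λ ∈ D, ∀ k : Fin n, pderiv k Λ ∈ D)
    (hvan : ∀ Λ ∈ D, ∀ i : Fin N, dapply ξ Λ (f i) = 0)
    (hone : (1 : MvPolynomial (Fin n) ℂ) ∈ D)
    (hcomplete : ∀ Δ : MvPolynomial (Fin n) ℂ,
      (∀ k : Fin n, pderiv k Δ ∈ D) → (∀ i : Fin N, dapply ξ Δ (f i) = 0) → Δ ∈ D) :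
    (↑D : Set (MvPolynomial (Fin n) ℂ)) =
      {Λ | ∀ p ∈ Ideal.span (Set.range f), dapply ξ Λ p = 0} ∧
    ∀ Q J : Ideal (MvPolynomial (Fin n) ℂ), Q.IsPrimary → Q.radical = mIdeal ξ →
      ¬ J ≤ mIdeal ξ → Ideal.span (Set.range f) = Q ⊓ J →
      (↑D : Set (MvPolynomial (Fin n) ℂ)) = {Λ | ∀ p ∈ Q, dapply ξ Λ p = 0} :=
  statement9_general ξ f D hstab hvan hcomplete
end
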